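/- arXiv:0909.4887 — 2 statements merged into one kernel-verified Lean document; each statement's English description precedes it below -/
import Mathlib

section
/- Let q₁,…,q₇ in ℝ³ be a symmetric configuration with r₁₅ ≠ r₁₆, Δ₁₂₃₅ ≠ 0 and Δ₁₅₆₇ ≠ 0, and suppose positive masses m₁,…,m₇ make it a central configuration. Then m₁ = m₂ = m₃ and m₅ = m₆ = m₇. -/
noncomputable section

open Finset

/-- Euclidean 3-space. -/
abbrev E3 : Type := EuclideanSpace ℝ (Fin 3)

/-- Determinant of three vectors in `ℝ³`. -/
def det3 (u v w : E3) : ℝ :=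
  Matrix.det !![u 0, u 1, u 2; v 0, v 1, v 2; w 0, w 1, w 2]

/-- The oriented volume `Δ_{ijhk} = det(qᵢ − qⱼ, qⱼ − q_h, q_h − q_k)`
(0-based indices: body `i+1` of the paper is index `i`). -/
def Delta {n : ℕ} (q : Fin n → E3) (i j h k : Fin n) : ℝ :=
  det3 (q i - q j) (q j - q h) (q h - q k)

/-- The unsigned volume `D_{ijhk} = |Δ_{ijhk}|`. -/
def Dvol {n : ℕ} (q : Fin n → E3) (i j h k : Fin n) : ℝ := |Delta q i j h k|

/-- `R_{ij} = ‖qᵢ − qⱼ‖⁻³`. -/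
def Rinv {n d : ℕ} (q : Fin n → EuclideanSpace ℝ (Fin d)) (i j : Fin n) : ℝ :=
  (‖q i - q j‖ ^ 3)⁻¹

/-- The `n` bodies with masses `m` at positions `q` in `ℝ^d` form a central configuration:
there is `λ ∈ ℝ` with `∑_{k ≠ i} m_k R_{ik} (qᵢ − q_k) = λ (qᵢ − q_G)` for every `i`,
where `q_G` is the center of mass. -/
def IsCentralConfig {n d : ℕ} (m : Fin n → ℝ) (q : Fin n → EuclideanSpace ℝ (Fin d)) : Prop :=
  ∃ lam : ℝ, ∀ i : Fin n,
    ∑ k ∈ Finset.univ.erase i, (m k * Rinv q i k) • (q i - q k)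
      = lam • (q i - (∑ j, m j)⁻¹ • ∑ j, m j • q j)

/-- Seven points in `ℝ³` (0-based indices) form a symmetric configuration:
`r₁₂=r₁₃=r₂₃=r₁₄=r₂₄=r₃₄=1`, `r₁₅=r₂₆=r₃₇`, `r₄₅=r₄₆=r₄₇`, `r₅₆=r₆₇=r₅₇`,
`r₁₆=r₁₇=r₂₅=r₂₇=r₃₅=r₃₆`, and there is a rotation (isometry) of order 3 mapping
`q₁→q₂→q₃→q₁`, `q₅→q₆→q₇→q₅` and fixing `q₄`. -/
def IsSymmetricConfig (q : Fin 7 → E3) : Prop :=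
  dist (q 0) (q 1) = 1 ∧ dist (q 0) (q 2) = 1 ∧ dist (q 1) (q 2) = 1 ∧
  dist (q 0) (q 3) = 1 ∧ dist (q 1) (q 3) = 1 ∧ dist (q 2) (q 3) = 1 ∧
  dist (q 0) (q 4) = dist (q 1) (q 5) ∧ dist (q 1) (q 5) = dist (q 2) (q 6) ∧
  dist (q 3) (q 4) = dist (q 3) (q 5) ∧ dist (q 3) (q 5) = dist (q 3) (q 6) ∧
  dist (q 4) (q 5) = dist (q 5) (q 6) ∧ dist (q 5) (q 6) = dist (q 4) (q 6) ∧
  dist (q 0) (q 5) = dist (q 0) (q 6) ∧ dist (q 0) (q 6) = dist (q 1) (q 4) ∧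
  dist (q 1) (q 4) = dist (q 1) (q 6) ∧ dist (q 1) (q 6) = dist (q 2) (q 4) ∧
  dist (q 2) (q 4) = dist (q 2) (q 5) ∧
  ∃ ρ : E3 ≃ᵢ E3, ρ.trans (ρ.trans ρ) = IsometryEquiv.refl E3 ∧
    ρ (q 0) = q 1 ∧ ρ (q 1) = q 2 ∧ ρ (q 2) = q 0 ∧
    ρ (q 4) = q 5 ∧ ρ (q 5) = q 6 ∧ ρ (q 6) = q 4 ∧ ρ (q 3) = q 3

/-- `H = (R₁₅ − R₄₅) D₁₄₅₆ − (R₄₅ − R₁₆) D₁₄₆₇`. -/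
def Hval (q : Fin 7 → E3) : ℝ :=
  (Rinv q 0 4 - Rinv q 3 4) * Dvol q 0 3 4 5 - (Rinv q 3 4 - Rinv q 0 5) * Dvol q 0 3 5 6

/-- A symmetric configuration is in `Ω` if `r₁₅ ∈ (0, √6/4)`, `Δ₁₄₅₇ ≤ 0` and
`1 > r₁₆ > r₄₅ > r₁₅`. -/
def InOmega (q : Fin 7 → E3) : Prop :=
  IsSymmetricConfig q ∧
  0 < dist (q 0) (q 4) ∧ dist (q 0) (q 4) < Real.sqrt 6 / 4 ∧
  Delta q 0 3 4 6 ≤ 0 ∧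
  dist (q 0) (q 5) < 1 ∧ dist (q 3) (q 4) < dist (q 0) (q 5) ∧
  dist (q 0) (q 4) < dist (q 3) (q 4)

/-- `Ω_H` is the subset of `Ω` where `H = 0`. -/
def InOmegaH (q : Fin 7 → E3) : Prop := InOmega q ∧ Hval q = 0

/-- `f_{ijh} = ∑_{k ∉ {i,j,h}} m_k (R_{ik} − R_{jk}) Δ_{ijhk}`. -/
def fval (m : Fin 7 → ℝ) (q : Fin 7 → E3) (i j h : Fin 7) : ℝ :=
  ∑ k ∈ Finset.univ \ {i, j, h}, m k * (Rinv q i k - Rinv q j k) * Delta q i j h k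

/-- `g(s₁₅, s₁₆, s₄₅)`. -/
def gfun (s15 s16 s45 : ℝ) : ℝ :=
  -3 + 2*s15 - 3*s15^2 + 4*s16 + 4*s15*s16 - 4*s16^2 + 2*s45 + 2*s15*s45 + 4*s16*s45 - 3*s45^2

/-- Area of the triangle with vertices `a`, `b`, `c` in `ℝ³`, via the cross product. -/
def triArea (a b c : E3) : ℝ :=
  ‖(WithLp.equiv 2 (Fin 3 → ℝ)).symm
    (crossProduct ((WithLp.equiv 2 (Fin 3 → ℝ)) (b - a)) ((WithLp.equiv 2 (Fin 3 → ℝ)) (c - a)))‖ / 2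


/-!
Applying the linear form `w ↦ det(qᵢ − qⱼ, qⱼ − q_h, w)` to the central configuration equations
of bodies `i` and `j` and subtracting gives the Laura–Andoyer relation
`∑ₖ mₖ (R_{ik} − R_{jk}) Δ_{ijhk} = 0`. For the triangles `(q₅, q₆, q₇)` and `(q₁, q₂, q₃)` of a
symmetric configuration, the equal distances kill all but two terms `k = a, b`, and the rotation,
whose linear part has determinant `1`, makes `Δ_{ijha} = Δ_{ijhb}`. What is left is
`(m_a − m_b)(R₁₅ − R₁₆) Δ_{ijha} = 0`.
-/

theorem det3_expand (u v w : E3) : det3 u v w =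
    u 0 * v 1 * w 2 - u 0 * v 2 * w 1 - u 1 * v 0 * w 2 + u 1 * v 2 * w 0
    + u 2 * v 0 * w 1 - u 2 * v 1 * w 0 := by
  simp [det3, Matrix.det_fin_three]

theorem det3_eq_basis_det (u v w : E3) :
    det3 u v w = (EuclideanSpace.basisFun (Fin 3) ℝ).toBasis.det ![u, v, w] := by
  rw [Module.Basis.det_apply, ← Matrix.det_transpose, det3]
  congr 1
  ext i j
  fin_cases i <;> fin_cases j <;> rfl

theorem det3_map (f : E3 →ₗ[ℝ] E3) (u v w : E3) :
    det3 (f u) (f v) (f w) = LinearMap.det f * det3 u v w := by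
  rw [det3_eq_basis_det, det3_eq_basis_det, ← Module.Basis.det_comp]
  congr 1
  ext i : 1
  fin_cases i <;> rfl

def det3Right (u v : E3) : E3 →ₗ[ℝ] ℝ where
  toFun := det3 u v
  map_add' x y := by simp only [det3_expand, PiLp.add_apply]; ring
  map_smul' c x := by
    simp only [det3_expand, PiLp.smul_apply, smul_eq_mul, RingHom.id_apply]; ring

@[simp] theorem det3Right_apply (u v w : E3) : det3Right u v w = det3 u v w := rfl

theorem Delta_eq_zero_of_eq {n : ℕ} (q : Fin n → E3) {i j h k : Fin n}
    (hk : k = i ∨ k = j ∨ k = h) : Delta q i j h k = 0 := by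
  rcases hk with rfl | rfl | rfl <;>
    · simp only [Delta, det3_expand, PiLp.sub_apply]; ring

theorem Delta_cycle_three {n : ℕ} (q : Fin n → E3) (i j h k : Fin n) :
    Delta q j h i k = Delta q i j h k := by
  simp only [Delta, det3_expand, PiLp.sub_apply]; ring

theorem Delta_cycle_four {n : ℕ} (q : Fin n → E3) (i j h k : Fin n) :
    Delta q j h k i = -Delta q i j h k := by
  simp only [Delta, det3_expand, PiLp.sub_apply]; ring

theorem LinearMap.det_eq_one_of_pow_eq_one {M : Type*} [AddCommGroup M] [Module ℝ M]
    {f : M →ₗ[ℝ] M} {n : ℕ} (hn : Odd n) (hf : f ^ n = 1) : LinearMap.det f = 1 := by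
  have h : LinearMap.det f ^ n = 1 ^ n := by rw [← map_pow, hf, map_one, one_pow]
  exact hn.pow_inj.mp h

theorem det3_sub_map_of_cube_eq_refl {ρ : E3 ≃ᵢ E3}
    (hρ : ρ.trans (ρ.trans ρ) = IsometryEquiv.refl E3) (a b c d e f : E3) :
    det3 (ρ a - ρ b) (ρ c - ρ d) (ρ e - ρ f) = det3 (a - b) (c - d) (e - f) := by
  set A : E3 →ₗ[ℝ] E3 := ρ.toRealLinearIsometryEquiv.toLinearEquiv.toLinearMap
  have hA : ∀ x y, ρ x - ρ y = A (x - y) := fun x y => by simp [A, map_sub]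
  have hρ3 : ∀ x, ρ (ρ (ρ x)) = x := fun x => congrArg (fun g : E3 ≃ᵢ E3 => g x) hρ
  have hA3 : A ^ 3 = 1 := by
    ext x : 1
    have h : ρ (ρ (ρ x)) - ρ (ρ (ρ 0)) = x - 0 := by rw [hρ3, hρ3]
    simpa [pow_succ, hA] using h
  rw [hA, hA, hA, det3_map, LinearMap.det_eq_one_of_pow_eq_one (by decide) hA3, one_mul]

theorem Delta_eq_of_cube_eq_refl {n : ℕ} {q : Fin n → E3} {ρ : E3 ≃ᵢ E3}
    (hρ : ρ.trans (ρ.trans ρ) = IsometryEquiv.refl E3) {i j h k i' j' h' k' : Fin n}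
    (hi : ρ (q i) = q i') (hj : ρ (q j) = q j') (hh : ρ (q h) = q h') (hk : ρ (q k) = q k') :
    Delta q i' j' h' k' = Delta q i j h k := by
  rw [Delta, ← hi, ← hj, ← hh, ← hk]
  exact det3_sub_map_of_cube_eq_refl hρ ..

theorem Rinv_eq_Rinv_iff {n d : ℕ} {q : Fin n → EuclideanSpace ℝ (Fin d)} {i j k l : Fin n} :
    Rinv q i j = Rinv q k l ↔ dist (q i) (q j) = dist (q k) (q l) := by
  rw [Rinv, Rinv, ← dist_eq_norm, ← dist_eq_norm, inv_inj,
    pow_left_inj₀ dist_nonneg dist_nonneg three_ne_zero]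

theorem IsCentralConfig.sum_mul_sub_mul_Delta_eq_zero {n : ℕ} {m : Fin n → ℝ} {q : Fin n → E3}
    (hcc : IsCentralConfig m q) (i j h : Fin n) :
    ∑ k, m k * (Rinv q i k - Rinv q j k) * Delta q i j h k = 0 := by
  obtain ⟨lam, hlam⟩ := hcc
  set c := (∑ j, m j)⁻¹ • ∑ j, m j • q j
  set φ := det3Right (q i - q j) (q j - q h)
  have hφ : ∀ l, φ (q l - q h) = 0 →
      ∑ k, m k * Rinv q l k * Delta q i j h k = lam * φ (q h - c) := by
    intro l hl
    have hshift : ∀ x, φ (q l - x) = φ (q h - x) := fun x => by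
      rw [← sub_eq_zero, ← map_sub, ← hl]; congr 1; abel
    have hl := congrArg φ (hlam l)
    rw [map_sum, map_smul, smul_eq_mul, hshift] at hl
    rw [← Finset.sum_erase univ (a := l) (by simp [Rinv]), ← hl]
    refine Finset.sum_congr rfl fun k _ => ?_
    rw [map_smul, smul_eq_mul, hshift]
    rfl
  have hi : φ (q i - q h) = 0 := by
    simp only [φ, det3Right_apply, det3_expand, PiLp.sub_apply]; ring
  have hj : φ (q j - q h) = 0 := by
    simp only [φ, det3Right_apply, det3_expand, PiLp.sub_apply]; ring
  simp only [mul_sub, sub_mul, Finset.sum_sub_distrib, hφ i hi, hφ j hj, sub_self]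

theorem IsCentralConfig.mass_eq_of_swap {n : ℕ} {m : Fin n → ℝ} {q : Fin n → E3}
    (hcc : IsCentralConfig m q) {i j h a b : Fin n}
    (hk : ∀ k ∉ ({i, j, h, a, b} : Finset (Fin n)), dist (q i) (q k) = dist (q j) (q k))
    (ha : dist (q i) (q a) = dist (q j) (q b)) (hb : dist (q i) (q b) = dist (q j) (q a))
    (hne : dist (q i) (q a) ≠ dist (q i) (q b))
    (hΔ : Delta q i j h a = Delta q i j h b) (hΔ0 : Delta q i j h a ≠ 0) : m a = m b := by
  have hab : a ≠ b := by rintro rfl; exact hne rfl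
  have hsum := hcc.sum_mul_sub_mul_Delta_eq_zero i j h
  rw [Fintype.sum_eq_add a b hab, ← hΔ, ← Rinv_eq_Rinv_iff.mpr ha,
    ← Rinv_eq_Rinv_iff.mpr hb] at hsum
  · have hfac : (m a - m b) * ((Rinv q i a - Rinv q i b) * Delta q i j h a) = 0 := by
      linear_combination hsum
    have hR : Rinv q i a - Rinv q i b ≠ 0 := sub_ne_zero.mpr (mt Rinv_eq_Rinv_iff.mp hne)
    exact sub_eq_zero.mp ((mul_eq_zero.mp hfac).resolve_right (mul_ne_zero hR hΔ0))
  · rintro k ⟨hka, hkb⟩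
    by_cases hijh : k = i ∨ k = j ∨ k = h
    · rw [Delta_eq_zero_of_eq q hijh, mul_zero]
    · rw [Rinv_eq_Rinv_iff.mpr (hk k (by simp_all)), sub_self, mul_zero, zero_mul]

theorem statement7_general (q : Fin 7 → E3)
    (hsym : IsSymmetricConfig q)
    (hr : dist (q 0) (q 4) ≠ dist (q 0) (q 5))
    (hΔ1 : Delta q 0 1 2 4 ≠ 0) (hΔ2 : Delta q 0 4 5 6 ≠ 0)
    (m : Fin 7 → ℝ)
    (hcc : IsCentralConfig m q) :
    (m 0 = m 1 ∧ m 1 = m 2) ∧ (m 4 = m 5 ∧ m 5 = m 6) := by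
  obtain ⟨-, -, -, d03, d13, d23, e1, e2, e3, e4, -, -, e7, e8, e9, e10, e11,
    ρ, hρ, r0, r1, r2, r4, r5, r6, -⟩ := hsym
  have hA := Delta_eq_of_cube_eq_refl hρ r0 r1 r2 r4
  have hB := Delta_eq_of_cube_eq_refl hρ r0 r1 r2 r5
  have hC := Delta_eq_of_cube_eq_refl hρ r4 r5 r6 r0
  have hD := Delta_eq_of_cube_eq_refl hρ r4 r5 r6 r1
  have c1 := Delta_cycle_three q 0 1 2 5
  have c2 := Delta_cycle_three q 4 5 6 1
  have hΔ0 : Delta q 4 5 6 0 ≠ 0 := by rw [Delta_cycle_four]; exact neg_ne_zero.mpr hΔ2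
  refine ⟨⟨hcc.mass_eq_of_swap (i := 4) (j := 5) (h := 6) ?_ ?_ ?_ ?_ (by linarith) hΔ0,
    hcc.mass_eq_of_swap (i := 5) (j := 6) (h := 4) ?_ ?_ ?_ ?_ (by linarith) (hC ▸ hΔ0)⟩,
    hcc.mass_eq_of_swap (i := 0) (j := 1) (h := 2) ?_ ?_ ?_ ?_ (by linarith) hΔ1,
    hcc.mass_eq_of_swap (i := 1) (j := 2) (h := 0) ?_ ?_ ?_ ?_ (by linarith) (hA ▸ hΔ1)⟩
  -- the remaining goals are identities among the distances of the symmetric configuration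
  all_goals first
    | intro k hk; fin_cases k <;> grind [dist_comm]
    | grind [dist_comm]

/-- For a symmetric configuration with `r₁₅ ≠ r₁₆`, `Δ₁₂₃₅ ≠ 0` and `Δ₁₅₆₇ ≠ 0`,
any positive masses making it a central configuration satisfy `m₁ = m₂ = m₃` and
`m₅ = m₆ = m₇`. -/
theorem statement7 (q : Fin 7 → E3) (hq : Function.Injective q)
    (hsym : IsSymmetricConfig q)
    (hr : dist (q 0) (q 4) ≠ dist (q 0) (q 5))
    (hΔ1 : Delta q 0 1 2 4 ≠ 0) (hΔ2 : Delta q 0 4 5 6 ≠ 0)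
    (m : Fin 7 → ℝ) (hm : ∀ i, 0 < m i)
    (hcc : IsCentralConfig m q) :
    (m 0 = m 1 ∧ m 1 = m 2) ∧ (m 4 = m 5 ∧ m 5 = m 6) :=
  statement7_general q hsym hr hΔ1 hΔ2 m hcc
end
end

section
/- Let q₁,…,q₇ in ℝ³ be a symmetric configuration in Ω with masses satisfying m₁ = m₂ = m₃ and m₅ = m₆ = m₇, and let b = r₅₆. Then f₁₇₅ = −b·f₂₅₁. -/
noncomputable section

open Finset

/-!
Put `t = r₁₆² − r₁₅²`. The distance equalities determine the inner products of `q₆ − q₅` with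
`q₁ − q₄`, `q₂ − q₄`, `q₃ − q₄`, which span `ℝ³` because `q₁q₂q₃q₄` is a regular tetrahedron.
They are those of `t (q₂ − q₁)`, so `q₆ − q₅ = t (q₂ − q₁)` and likewise `q₇ − q₆ = t (q₃ − q₂)`:
the triangle `q₅q₆q₇` is a homothetic copy of `q₁q₂q₃` with ratio `t`, and `b = |t| = t` since
`r₁₅ < r₁₆` in `Ω`. Moreover `q₁`, `q₄`, `q₅` lie in the mirror plane of the segment `q₂q₃`.
With these facts every volume in `f₁₇₅` is `−t` times the matching volume in `f₂₅₁`, and the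
symmetry of the distances and of the masses matches the coefficients.
-/

open scoped RealInnerProductSpace

section InnerProductSpace

variable {V : Type*} [NormedAddCommGroup V] [InnerProductSpace ℝ V]

theorem inner_sub_sub_eq_dist_sq (a b c d : V) :
    ⟪a - b, c - d⟫ = (dist a d ^ 2 + dist b c ^ 2 - dist a c ^ 2 - dist b d ^ 2) / 2 := by
  simp only [dist_eq_norm, norm_sub_sq_real, inner_sub_left, inner_sub_right]
  ring

theorem eq_of_inner_eq_of_regular_tetrahedron (hV : Module.finrank ℝ V = 3) {o a b c x y : V}
    (hao : dist a o = 1) (hbo : dist b o = 1) (hco : dist c o = 1)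
    (hab : dist a b = 1) (hac : dist a c = 1) (hbc : dist b c = 1)
    (ha : ⟪a - o, x⟫ = ⟪a - o, y⟫) (hb : ⟪b - o, x⟫ = ⟪b - o, y⟫)
    (hc : ⟪c - o, x⟫ = ⟪c - o, y⟫) :
    x = y := by
  have hinner (p p' : V) :
      ⟪p - o, p' - o⟫ = (dist p o ^ 2 + dist p' o ^ 2 - dist p p' ^ 2) / 2 := by
    rw [inner_sub_sub_eq_dist_sq, dist_self, dist_comm o]
    ring
  have hgram : Matrix.gram ℝ ![a - o, b - o, c - o] =
      !![1, 1/2, 1/2; 1/2, 1, 1/2; 1/2, 1/2, 1] := by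
    ext i j
    fin_cases i <;> fin_cases j <;>
      norm_num [Matrix.gram_apply, hinner, ← dist_eq_norm, hao, hbo, hco, hab, hac, hbc,
        dist_comm b a, dist_comm c a, dist_comm c b]
  have hdet : (Matrix.gram ℝ ![a - o, b - o, c - o]).det ≠ 0 := by
    simp only [hgram, Matrix.det_fin_three, Matrix.of_apply, Matrix.cons_val',
      Matrix.cons_val_zero, Matrix.cons_val_fin_one, Matrix.cons_val_one, Matrix.cons_val]
    norm_num
  have : FiniteDimensional ℝ V := Module.finite_of_finrank_eq_succ hV
  let basis := basisOfLinearIndependentOfCardEqFinrank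
    (Matrix.linearIndependent_of_det_gram_ne_zero hdet) (by simp [hV])
  refine InnerProductSpace.ext_inner_left_basis basis fun i => ?_
  fin_cases i <;> simpa [basis]

theorem sub_eq_smul_sub_of_dist_eq (hV : Module.finrank ℝ V = 3) {o a b c x y : V}
    (hao : dist a o = 1) (hbo : dist b o = 1) (hco : dist c o = 1)
    (hab : dist a b = 1) (hac : dist a c = 1) (hbc : dist b c = 1)
    (hox : dist o x = dist o y) (hax : dist a x = dist b y) (hay : dist a y = dist b x)
    (hcx : dist c x = dist c y) :
    y - x = (dist a y ^ 2 - dist a x ^ 2) • (b - a) := by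
  rw [dist_comm o, dist_comm o] at hox
  refine eq_of_inner_eq_of_regular_tetrahedron hV hao hbo hco hab hac hbc ?_ ?_ ?_ <;>
  · rw [real_inner_smul_right, inner_sub_sub_eq_dist_sq, inner_sub_sub_eq_dist_sq]
    simp only [dist_self, dist_comm o, hox, hao, hbo, hab, hac, hbc, dist_comm b a,
      dist_comm c a, dist_comm c b, hax, hay, hcx]
    ring

end InnerProductSpace

theorem det3_eq (u v w : E3) : det3 u v w =
    u 0 * (v 1 * w 2 - v 2 * w 1) - u 1 * (v 0 * w 2 - v 2 * w 0) +
      u 2 * (v 0 * w 1 - v 1 * w 0) := by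
  simp only [det3, Matrix.det_fin_three, Matrix.of_apply, Matrix.cons_val', Matrix.cons_val_zero,
    Matrix.cons_val_fin_one, Matrix.cons_val_one, Matrix.cons_val]
  ring

theorem det3_eq_zero_of_inner_eq_zero {u v w n : E3} (hn : n ≠ 0)
    (hu : ⟪u, n⟫ = 0) (hv : ⟪v, n⟫ = 0) (hw : ⟪w, n⟫ = 0) : det3 u v w = 0 := by
  rw [det3, ← Matrix.exists_mulVec_eq_zero_iff]
  refine ⟨n.ofLp, fun h => hn (by simpa using congrArg (WithLp.toLp 2) h), ?_⟩
  simp only [PiLp.inner_apply, RCLike.inner_apply, conj_trivial, Fin.sum_univ_three] at hu hv hw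
  ext i
  fin_cases i <;> simp [Matrix.mulVec, dotProduct, Fin.sum_univ_three] <;> linarith

/-- `a`, `x`, `o` and the midpoint of `bc` lie in the perpendicular bisector plane of `bc`. -/
theorem det3_eq_zero_of_dist_eq {o a b c x : E3} (hbc : b ≠ c) (ho : dist b o = dist c o)
    (ha : dist b a = dist c a) (hx : dist b x = dist c x) :
    det3 (a - o) ((b - o) + (c - o)) (x - o) = 0 := by
  have horth {p : E3} (hp : dist b p = dist c p) : ⟪p - o, b - c⟫ = 0 := by
    rw [inner_sub_sub_eq_dist_sq, dist_comm p, dist_comm p, hp, dist_comm o, dist_comm o, ho]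
    ring
  refine det3_eq_zero_of_inner_eq_zero (sub_ne_zero.mpr hbc) (horth ha) ?_ (horth hx)
  rw [inner_add_left, inner_sub_sub_eq_dist_sq, inner_sub_sub_eq_dist_sq, dist_comm o b,
    dist_comm o c, ho, dist_comm c b, dist_self, dist_self]
  ring

theorem Rinv_eq_of_dist_eq {n d : ℕ} {q : Fin n → EuclideanSpace ℝ (Fin d)} {i j k l : Fin n}
    (h : dist (q i) (q j) = dist (q k) (q l)) : Rinv q i j = Rinv q k l := by
  simp only [Rinv, ← dist_eq_norm, h]

theorem fval_zero_six_four (m : Fin 7 → ℝ) (q : Fin 7 → E3) :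
    fval m q 0 6 4 = m 1 * (Rinv q 0 1 - Rinv q 6 1) * Delta q 0 6 4 1 +
      m 2 * (Rinv q 0 2 - Rinv q 6 2) * Delta q 0 6 4 2 +
      m 3 * (Rinv q 0 3 - Rinv q 6 3) * Delta q 0 6 4 3 +
      m 5 * (Rinv q 0 5 - Rinv q 6 5) * Delta q 0 6 4 5 := by
  simp [fval, Finset.sdiff_eq_filter, Finset.sum_filter, Fin.sum_univ_seven]

theorem fval_one_four_zero (m : Fin 7 → ℝ) (q : Fin 7 → E3) :
    fval m q 1 4 0 = m 2 * (Rinv q 1 2 - Rinv q 4 2) * Delta q 1 4 0 2 +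
      m 3 * (Rinv q 1 3 - Rinv q 4 3) * Delta q 1 4 0 3 +
      m 5 * (Rinv q 1 5 - Rinv q 4 5) * Delta q 1 4 0 5 +
      m 6 * (Rinv q 1 6 - Rinv q 4 6) * Delta q 1 4 0 6 := by
  simp [fval, Finset.sdiff_eq_filter, Finset.sum_filter, Fin.sum_univ_seven]

theorem Delta_relations_of_homothetic {q : Fin 7 → E3} {t : ℝ}
    (h5 : q 5 - q 4 = t • (q 1 - q 0)) (h6 : q 6 - q 5 = t • (q 2 - q 1))
    (hplane : det3 (q 0 - q 3) ((q 1 - q 3) + (q 2 - q 3)) (q 4 - q 3) = 0) :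
    Delta q 0 6 4 1 = -(t * Delta q 1 4 0 2) ∧ Delta q 0 6 4 2 = 0 ∧
      Delta q 0 6 4 3 = -(t * Delta q 1 4 0 3) ∧ Delta q 0 6 4 5 = -(t * Delta q 1 4 0 6) ∧
      Delta q 1 4 0 5 = 0 := by
  rw [sub_eq_iff_eq_add] at h5 h6
  simp only [Delta, h6, h5, det3_eq, PiLp.sub_apply, PiLp.add_apply, PiLp.smul_apply,
    smul_eq_mul] at hplane ⊢
  exact ⟨by ring, by ring, by linear_combination t * hplane, by ring, by ring⟩

/-- `r₁₆² − r₁₅²`, the ratio of the homothety taking `q₁q₂q₃` to `q₅q₆q₇`. -/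
def homothetyRatio (q : Fin 7 → E3) : ℝ := dist (q 0) (q 5) ^ 2 - dist (q 0) (q 4) ^ 2

namespace IsSymmetricConfig

variable {q : Fin 7 → E3}

theorem sub_eq_homothetyRatio_smul (hq : IsSymmetricConfig q) :
    q 5 - q 4 = homothetyRatio q • (q 1 - q 0) ∧ q 6 - q 5 = homothetyRatio q • (q 2 - q 1) := by
  obtain ⟨d01, d02, d12, d03, d13, d23, h04_15, h15_26, h34_35, h35_36, -, -, h05_06,
    h06_14, h14_16, h16_24, h24_25, -⟩ := hq
  have hV : Module.finrank ℝ E3 = 3 := finrank_euclideanSpace_fin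
  refine ⟨sub_eq_smul_sub_of_dist_eq hV d03 d13 d23 d01 d02 d12 h34_35 h04_15
    (h05_06.trans h06_14) h24_25, ?_⟩
  rw [homothetyRatio, h04_15, h05_06, h06_14, h14_16]
  exact sub_eq_smul_sub_of_dist_eq hV d13 d23 d03 d12 (by rwa [dist_comm]) (by rwa [dist_comm])
    h35_36 h15_26 (h16_24.trans h24_25) h05_06

theorem dist_four_five (hq : IsSymmetricConfig q) : dist (q 4) (q 5) = |homothetyRatio q| := by
  rw [dist_comm, dist_eq_norm, hq.sub_eq_homothetyRatio_smul.1, norm_smul, Real.norm_eq_abs,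
    ← dist_eq_norm, dist_comm, hq.1, mul_one]

theorem det3_eq_zero (hq : IsSymmetricConfig q) :
    det3 (q 0 - q 3) ((q 1 - q 3) + (q 2 - q 3)) (q 4 - q 3) = 0 := by
  obtain ⟨d01, d02, d12, -, d13, d23, -, -, -, -, -, -, -, -, h14_16, h16_24, -⟩ := hq
  exact det3_eq_zero_of_dist_eq (fun h => by simp [h] at d12) (d13.trans d23.symm)
    (by rw [dist_comm, d01, dist_comm, d02]) (h14_16.trans h16_24)

theorem fval_eq_neg_mul_fval (hq : IsSymmetricConfig q) {m : Fin 7 → ℝ}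
    (hm12 : m 0 = m 1) (hm23 : m 1 = m 2) (hm56 : m 4 = m 5) (hm67 : m 5 = m 6) :
    fval m q 0 6 4 = -(homothetyRatio q * fval m q 1 4 0) := by
  obtain ⟨h5, h6⟩ := hq.sub_eq_homothetyRatio_smul
  obtain ⟨hΔ1, hΔ2, hΔ3, hΔ5, hΔ5'⟩ := Delta_relations_of_homothetic h5 h6 hq.det3_eq_zero
  obtain ⟨d01, -, d12, d03, d13, -, -, -, h34_35, h35_36, -, h56_46, h05_06,
    h06_14, h14_16, h16_24, -, -⟩ := hq
  rw [fval_zero_six_four, fval_one_four_zero, hΔ1, hΔ2, hΔ3, hΔ5, hΔ5',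
    Rinv_eq_of_dist_eq (d01.trans d12.symm), Rinv_eq_of_dist_eq (d03.trans d13.symm),
    Rinv_eq_of_dist_eq (h05_06.trans (h06_14.trans h14_16)),
    Rinv_eq_of_dist_eq (i := 6) (j := 1) (k := 4) (l := 2) (by rw [dist_comm, h16_24, dist_comm]),
    Rinv_eq_of_dist_eq (i := 6) (j := 3) (k := 4) (l := 3)
      (by rw [dist_comm, ← h35_36, ← h34_35, dist_comm]),
    Rinv_eq_of_dist_eq (i := 6) (j := 5) (k := 4) (l := 6) (by rw [dist_comm, h56_46]),
    ← hm23, ← hm12, ← hm67, ← hm56]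
  ring

end IsSymmetricConfig

/-- For a symmetric configuration in `Ω` with `m₁ = m₂ = m₃` and `m₅ = m₆ = m₇`,
with `b = r₅₆`, one has `f₁₇₅ = −b·f₂₅₁`. -/
theorem statement10 (q : Fin 7 → E3) (m : Fin 7 → ℝ)
    (hΩ : InOmega q)
    (hm12 : m 0 = m 1) (hm23 : m 1 = m 2) (hm56 : m 4 = m 5) (hm67 : m 5 = m 6) :
    fval m q 0 6 4 = -(dist (q 4) (q 5) * fval m q 1 4 0) := by
  obtain ⟨hq, -, -, -, -, h34_05, h04_34⟩ := hΩ
  have hratio : 0 ≤ homothetyRatio q :=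
    sub_nonneg.mpr (pow_le_pow_left₀ dist_nonneg (h04_34.trans h34_05).le 2)
  rw [hq.dist_four_five, abs_of_nonneg hratio]
  exact hq.fval_eq_neg_mul_fval hm12 hm23 hm56 hm67
end
end
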